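/- arXiv:2601.20554 — 2 statements merged into one kernel-verified Lean document; each statement's English description precedes it below -/
import Mathlib

section
/- Let α ∈ (0,1), n ≥ 1, and define f(x) = inf over r ∈ ℝ of (r + (1/(nα)) Σᵢ (xᵢ - r)⁺) for x ∈ ℝⁿ. Then for all x, y ∈ ℝⁿ, f(x) - f(y) ≤ (1/(nα)) Σᵢ (xᵢ - yᵢ)⁺. -/
/-!
For each `r`, the objective at `x` exceeds the objective at `y` by at most
`(1 / (n α)) ∑ᵢ (xᵢ - yᵢ)⁺`, because `(xᵢ - r)⁺ ≤ (yᵢ - r)⁺ + (xᵢ - yᵢ)⁺`. Taking the infimum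
over `r` gives the claim; this needs the objective at `x` to be bounded below, and for `α ≤ 1`
the sample mean is such a bound (CVaR dominates the mean).
-/

/-- Empirical CVaR functional at level `α` for a sample `x : Fin n → ℝ`. -/
noncomputable def ecvar (n : ℕ) (α : ℝ) (x : Fin n → ℝ) : ℝ :=
  ⨅ r : ℝ, (r + (1 / (n * α)) * ∑ i, max (x i - r) 0)

noncomputable def ecvarObjective (n : ℕ) (α : ℝ) (x : Fin n → ℝ) (r : ℝ) : ℝ :=
  r + (1 / (n * α)) * ∑ i, max (x i - r) 0

theorem ecvar_eq_iInf_ecvarObjective (n : ℕ) (α : ℝ) (x : Fin n → ℝ) :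
    ecvar n α x = ⨅ r, ecvarObjective n α x r :=
  rfl

theorem max_sub_le_max_sub_add_max_sub (a b r : ℝ) :
    max (a - r) 0 ≤ max (b - r) 0 + max (a - b) 0 := by
  simpa using max_add_add_le_max_add_max (a := b - r) (b := a - b) (c := (0 : ℝ)) (d := 0)

theorem ecvarObjective_le_add {n : ℕ} {α : ℝ} (hα : 0 ≤ α) (x y : Fin n → ℝ) (r : ℝ) :
    ecvarObjective n α x r ≤
      ecvarObjective n α y r + (1 / (n * α)) * ∑ i, max (x i - y i) 0 := by
  have hsum : ∑ i, max (x i - r) 0 ≤ ∑ i, max (y i - r) 0 + ∑ i, max (x i - y i) 0 := by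
    rw [← Finset.sum_add_distrib]
    exact Finset.sum_le_sum fun i _ => max_sub_le_max_sub_add_max_sub (x i) (y i) r
  unfold ecvarObjective
  have hc : 0 ≤ 1 / ((n : ℝ) * α) := by positivity
  nlinarith [mul_le_mul_of_nonneg_left hsum hc]

theorem mean_le_ecvarObjective {n : ℕ} (hn : 0 < n) {α : ℝ} (hα₀ : 0 < α) (hα₁ : α ≤ 1)
    (x : Fin n → ℝ) (r : ℝ) :
    (∑ i, x i) / n ≤ ecvarObjective n α x r := by
  set μ := (∑ i, x i) / n
  have hn' : (0 : ℝ) < n := Nat.cast_pos.mpr hn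
  have hsum_nonneg : 0 ≤ ∑ i, max (x i - r) 0 :=
    Finset.sum_nonneg fun i _ => le_max_right _ _
  have hsum_ge : n * (μ - r) ≤ ∑ i, max (x i - r) 0 := by
    calc (n : ℝ) * (μ - r) = ∑ i, (x i - r) := by
          simp only [μ, Finset.sum_sub_distrib, Finset.sum_const, Finset.card_univ,
            Fintype.card_fin, nsmul_eq_mul]
          field_simp
      _ ≤ ∑ i, max (x i - r) 0 := Finset.sum_le_sum fun i _ => le_max_left _ _
  unfold ecvarObjective
  rcases le_total μ r with h | h
  · have : 0 ≤ 1 / ((n : ℝ) * α) * ∑ i, max (x i - r) 0 := by positivity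
    linarith
  · have hscaled : (μ - r) / α ≤ 1 / (n * α) * ∑ i, max (x i - r) 0 := by
      rw [div_mul_eq_mul_div, one_mul, div_le_div_iff₀ hα₀ (by positivity)]
      nlinarith
    have : μ - r ≤ (μ - r) / α := le_div_self (by linarith) hα₀ hα₁
    linarith

theorem bddBelow_range_ecvarObjective {n : ℕ} (hn : 0 < n) {α : ℝ} (hα₀ : 0 < α)
    (hα₁ : α ≤ 1) (x : Fin n → ℝ) : BddBelow (Set.range (ecvarObjective n α x)) :=
  ⟨(∑ i, x i) / n, Set.forall_mem_range.mpr (mean_le_ecvarObjective hn hα₀ hα₁ x)⟩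

theorem ecvar_sub_le (α : ℝ) (hα : α ∈ Set.Ioo (0 : ℝ) 1) (n : ℕ) (hn : 1 ≤ n)
    (x y : Fin n → ℝ) :
    ecvar n α x - ecvar n α y ≤ (1 / (n * α)) * ∑ i, max (x i - y i) 0 := by
  have hbdd := bddBelow_range_ecvarObjective hn hα.1 hα.2.le x
  rw [sub_le_comm, ecvar_eq_iInf_ecvarObjective n α y]
  refine le_ciInf fun r => ?_
  rw [sub_le_iff_le_add]
  calc ecvar n α x ≤ ecvarObjective n α x r := ciInf_le hbdd r
    _ ≤ _ := ecvarObjective_le_add hα.1.le x y r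
end

section
/- Let α ∈ (0,1), n ≥ 1, and f(x) = inf_{r∈ℝ} (r + (1/(nα)) Σᵢ (xᵢ - r)⁺). Then for all x, y ∈ ℝⁿ: -(1/(nα)) Σᵢ (yᵢ - xᵢ)⁺ ≤ f(x) - f(y) ≤ (1/(nα)) Σᵢ (xᵢ - yᵢ)⁺. -/
open Finset Set

section Objective

variable {ι : Type*} [Fintype ι] {c : ℝ}

lemma le_add_mul_sum_max_sub_zero (hc : 1 ≤ c * Fintype.card ι) {m : ℝ} {z : ι → ℝ}
    (hm : ∀ i, m ≤ z i) (r : ℝ) : m ≤ r + c * ∑ i, max (z i - r) 0 := by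
  have hc0 : 0 ≤ c := by
    by_contra! h
    nlinarith [(Fintype.card ι).cast_nonneg (α := ℝ)]
  calc m ≤ r + max (m - r) 0 := by linarith [le_max_left (m - r) 0]
    _ ≤ r + c * Fintype.card ι * max (m - r) 0 := by
        gcongr; exact le_mul_of_one_le_left (le_max_right _ _) hc
    _ = r + c * ∑ _i : ι, max (m - r) 0 := by simp only [sum_const, card_univ, nsmul_eq_mul]; ring
    _ ≤ r + c * ∑ i, max (z i - r) 0 := by gcongr with i; exact hm i

lemma bddBelow_range_add_mul_sum_max_sub_zero (hc : 1 ≤ c * Fintype.card ι) (z : ι → ℝ) :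
    BddBelow (range fun r : ℝ => r + c * ∑ i, max (z i - r) 0) := by
  obtain ⟨m, hm⟩ := Finite.bddBelow_range z
  exact ⟨m, forall_mem_range.2 (le_add_mul_sum_max_sub_zero hc fun i => hm (mem_range_self i))⟩

end Objective

lemma sum_max_sub_zero_le {ι : Type*} (s : Finset ι) (x y : ι → ℝ) (r : ℝ) :
    ∑ i ∈ s, max (x i - r) 0 ≤ ∑ i ∈ s, max (y i - r) 0 + ∑ i ∈ s, max (x i - y i) 0 := by
  rw [← sum_add_distrib]
  gcongr with i
  calc max (x i - r) 0 = max ((y i - r) + (x i - y i)) (0 + 0) := by ring_nf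
    _ ≤ max (y i - r) 0 + max (x i - y i) 0 := max_add_add_le_max_add_max

lemma ecvar_le_add {α : ℝ} (hα₀ : 0 < α) (hα₁ : α ≤ 1) {n : ℕ} (hn : 1 ≤ n) (x y : Fin n → ℝ) :
    ecvar n α x ≤ ecvar n α y + (1 / (n * α)) * ∑ i, max (x i - y i) 0 := by
  have hn₀ : (0 : ℝ) < n := by exact_mod_cast hn
  have hc : 1 ≤ 1 / (n * α) * Fintype.card (Fin n) := by
    rw [Fintype.card_fin, one_div_mul_eq_div, le_div_iff₀ (by positivity)]
    nlinarith
  rw [← sub_le_iff_le_add]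
  refine le_ciInf fun r => sub_le_iff_le_add.2 ?_
  calc ecvar n α x ≤ r + 1 / (n * α) * ∑ i, max (x i - r) 0 :=
        ciInf_le (bddBelow_range_add_mul_sum_max_sub_zero hc x) r
    _ ≤ r + 1 / (n * α) * (∑ i, max (y i - r) 0 + ∑ i, max (x i - y i) 0) := by
        gcongr; exact sum_max_sub_zero_le _ x y r
    _ = _ := by ring

theorem ecvar_sub_bounds (α : ℝ) (hα : α ∈ Set.Ioo (0 : ℝ) 1) (n : ℕ) (hn : 1 ≤ n)
    (x y : Fin n → ℝ) :
    -((1 / (n * α)) * ∑ i, max (y i - x i) 0) ≤ ecvar n α x - ecvar n α y ∧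
      ecvar n α x - ecvar n α y ≤ (1 / (n * α)) * ∑ i, max (x i - y i) 0 := by
  have hxy := ecvar_le_add hα.1 hα.2.le hn x y
  have hyx := ecvar_le_add hα.1 hα.2.le hn y x
  constructor <;> linarith
end
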